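/- arXiv:2307.15896 — 3 statements merged into one kernel-verified Lean document; each statement's English description precedes it below -/
import Mathlib

section
/- Let N ≥ 2 and θ ∈ (0, Nπ/2) with θ ≠ mπ/2 for m = 1,...,N-1. With D_g the N×N tridiagonal matrix of the previous context, for each j = 2,...,N the vector ν_j with entries ν_{l,j} = √(2/N)·sin((π(j-1)/N)(l - 1/2)) is an eigenvector of D_g with eigenvalue ξ_j = 2cot(2θ/N) - 2csc(2θ/N)·cos(π(j-1)/N). -/
open Real Matrix

/-!
The vector `v_l = sin (α (l + 1/2))` is a discrete sine mode: it satisfies the three-term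
recurrence `v_{l-1} + v_{l+1} = 2 cos α · v_l`, so every interior row of a symmetric tridiagonal
matrix with diagonal `e` and off-diagonal `f` multiplies it by `e + 2 f cos α`. At the two ends
the ghost values are reflections, `v_{-1} = -v_0` and, since `sin (α N) = 0` for `α = π (j-1)/N`,
`v_N = -v_{N-1}`; the missing neighbour is therefore absorbed exactly by a corner entry `e - f`.
For `D_g` this corner condition is the half-angle identity `cot y = cot 2y + csc 2y`.
-/

theorem cot_two_mul_add_one_div_sin_two_mul (x : ℝ) :
    cot (2 * x) + 1 / sin (2 * x) = cot x := by
  rw [cot_eq_cos_div_sin, cot_eq_cos_div_sin, sin_two_mul, cos_two_mul]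
  rcases eq_or_ne (sin x) 0 with hs | hs
  · simp [hs]
  rcases eq_or_ne (cos x) 0 with hc | hc
  · simp [hc]
  field_simp
  ring

theorem Finset.sum_range_ite_add_one_eq {M : Type*} [AddCommMonoid M] {n i : ℕ} (hi : i ≤ n)
    (g : ℕ → M) :
    ∑ k ∈ range n, (if k + 1 = i then g k else 0) = if 0 < i then g (i - 1) else 0 := by
  rcases i with _ | i
  · simp
  · simp [sum_ite_eq', show i < n by omega]

section CornerTridiag

variable {R : Type*} [CommRing R] {N : ℕ}

def cornerTridiag (N : ℕ) (d e f : R) : Matrix (Fin N) (Fin N) R :=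
  Matrix.of fun i j =>
    if i = j then (if i.val = 0 ∨ i.val = N - 1 then d else e)
    else if i.val + 1 = j.val ∨ j.val + 1 = i.val then f else 0

theorem cornerTridiag_mulVec_apply (d e f : R) (w : ℤ → R) (i : Fin N) :
    (cornerTridiag N d e f *ᵥ fun l => w l) i =
      (if i.val = 0 ∨ i.val = N - 1 then d else e) * w i
        + (if i.val + 1 < N then f * w (i + 1) else 0)
        + (if 0 < i.val then f * w (i - 1) else 0) := by
  simp only [mulVec, dotProduct, cornerTridiag, of_apply, Fin.ext_iff]
  set D := if i.val = 0 ∨ i.val = N - 1 then d else e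
  have hsummand : ∀ k : ℕ,
      (if i.val = k then D else if i.val + 1 = k ∨ k + 1 = i.val then f else 0) * w k =
        (if k = i.val then D * w k else 0) + (if k = i.val + 1 then f * w k else 0)
          + (if k + 1 = i.val then f * w k else 0) := by
    intro k
    split_ifs <;> first | ring1 | omega
  rw [Fin.sum_univ_eq_sum_range
      (fun k => (if i.val = k then D else if i.val + 1 = k ∨ k + 1 = i.val then f else 0) * w k),
    Finset.sum_congr rfl fun k _ => hsummand k, Finset.sum_add_distrib, Finset.sum_add_distrib,
    Finset.sum_range_ite_add_one_eq i.isLt.le]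
  simp only [Finset.sum_ite_eq', Finset.mem_range, i.isLt, if_true]
  rcases Nat.eq_zero_or_pos i.val with h | h
  · simp [h]
  · simp [h, Nat.cast_pred h]

theorem cornerTridiag_mulVec_eq_smul (hN : 2 ≤ N) (e f c : R) (w : ℤ → R)
    (hrec : ∀ n : ℤ, w (n - 1) + w (n + 1) = c * w n)
    (hleft : w (-1) = -w 0) (hright : w N = -w (N - 1)) :
    cornerTridiag N (e - f) e f *ᵥ (fun l : Fin N => w l) = (e + c * f) • fun l : Fin N => w l := by
  funext i
  have hi := i.isLt
  rw [cornerTridiag_mulVec_apply, Pi.smul_apply, smul_eq_mul]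
  by_cases hfirst : i.val = 0
  · have hleft' : w ((i : ℤ) - 1) = -w i := by simpa [hfirst] using hleft
    rw [if_pos (Or.inl hfirst), if_pos (by omega), if_neg (by omega)]
    linear_combination f * hrec i - f * hleft'
  by_cases hlast : i.val = N - 1
  · have hright' : w ((i : ℤ) + 1) = -w i := by
      rw [show (i : ℤ) + 1 = N by omega, hright, show (N : ℤ) - 1 = i by omega]
    rw [if_pos (Or.inr hlast), if_neg (by omega), if_pos (by omega)]
    linear_combination f * hrec i - f * hright'
  · rw [if_neg (by omega), if_pos (by omega), if_pos (by omega)]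
    linear_combination f * hrec i

theorem cornerTridiag_mulVec_sin (hN : 2 ≤ N) (e f a α : ℝ) (hα : sin (α * N) = 0) :
    cornerTridiag N (e - f) e f *ᵥ (fun l : Fin N => a * sin (α * ((l : ℕ) + 1 / 2))) =
      (e + 2 * cos α * f) • fun l : Fin N => a * sin (α * ((l : ℕ) + 1 / 2)) := by
  have h := cornerTridiag_mulVec_eq_smul hN e f (2 * cos α)
    (fun n : ℤ => a * sin (α * (n + 1 / 2))) ?rec ?left ?right
  · simpa only [Int.cast_natCast] using h
  case rec =>
    intro n
    have h := two_mul_sin_mul_cos (α * (n + 1 / 2)) α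
    push_cast
    ring_nf at h ⊢
    linear_combination -a * h
  case left =>
    push_cast
    rw [show α * (-1 + 1 / 2) = -(α * (0 + 1 / 2)) by ring, sin_neg, neg_mul_eq_mul_neg]
  case right =>
    have h := two_mul_sin_mul_cos (α * N) (α / 2)
    rw [hα] at h
    push_cast
    ring_nf at h ⊢
    linear_combination -a * h

end CornerTridiag

theorem dipole_matrix_remaining_eigenpairs_general (N : ℕ) (θ : ℝ)
    (Dg : Matrix (Fin N) (Fin N) ℝ)
    (hDg : Dg = Matrix.of fun i j =>
      if i = j then
        (if i.val = 0 ∨ i.val = N - 1 then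
            Real.cot (2 * θ / N) + Real.cot (θ / N)
          else 2 * Real.cot (2 * θ / N))
      else if i.val + 1 = j.val ∨ j.val + 1 = i.val then
        -(1 / Real.sin (2 * θ / N))
      else 0) :
    ∀ j : ℕ, 2 ≤ j → j ≤ N →
      Dg.mulVec
          (fun l : Fin N =>
            Real.sqrt (2 / N) * Real.sin ((Real.pi * (j - 1) / N) * ((l : ℕ) + 1 - 1 / 2))) =
        (2 * Real.cot (2 * θ / N) -
            2 * (1 / Real.sin (2 * θ / N)) * Real.cos (Real.pi * (j - 1) / N)) •
          (fun l : Fin N =>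
            Real.sqrt (2 / N) * Real.sin ((Real.pi * (j - 1) / N) * ((l : ℕ) + 1 - 1 / 2))) := by
  intro j hj2 hjN
  have hcorner : cot (2 * θ / N) + cot (θ / N) = 2 * cot (2 * θ / N) - -(1 / sin (2 * θ / N)) := by
    rw [← cot_two_mul_add_one_div_sin_two_mul (θ / N), mul_div_assoc]
    ring
  have hD : Dg = cornerTridiag N (2 * cot (2 * θ / N) - -(1 / sin (2 * θ / N)))
      (2 * cot (2 * θ / N)) (-(1 / sin (2 * θ / N))) := by
    rw [hDg, hcorner]
    rfl
  have hα : sin (π * (j - 1) / N * N) = 0 := by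
    rw [div_mul_cancel₀ _ (Nat.cast_ne_zero.mpr (by omega)), show π * ((j : ℝ) - 1) = ((j - 1 : ℤ) : ℝ) * π by
      push_cast; ring]
    exact sin_int_mul_pi _
  simp only [add_sub_assoc, show (1 : ℝ) - 1 / 2 = 1 / 2 by norm_num]
  rw [hD, cornerTridiag_mulVec_sin (by omega) _ _ _ _ hα]
  congr 1
  ring

/-- For `j = 2,…,N`, the vector with entries `√(2/N)·sin((π(j-1)/N)(l-1/2))`
(`l = 1,…,N`) is an eigenvector of the dipole Green's matrix `D_g` with eigenvalue
`ξ_j = 2cot(2θ/N) - 2csc(2θ/N)·cos(π(j-1)/N)`. -/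
theorem dipole_matrix_remaining_eigenpairs (N : ℕ) (hN : 2 ≤ N) (θ : ℝ)
    (hθ : 0 < θ) (hθN : θ < N * Real.pi / 2)
    (hθm : ∀ m : ℕ, 1 ≤ m → m ≤ N - 1 → θ ≠ m * Real.pi / 2)
    (Dg : Matrix (Fin N) (Fin N) ℝ)
    (hDg : Dg = Matrix.of fun i j =>
      if i = j then
        (if i.val = 0 ∨ i.val = N - 1 then
            Real.cot (2 * θ / N) + Real.cot (θ / N)
          else 2 * Real.cot (2 * θ / N))
      else if i.val + 1 = j.val ∨ j.val + 1 = i.val then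
        -(1 / Real.sin (2 * θ / N))
      else 0) :
    ∀ j : ℕ, 2 ≤ j → j ≤ N →
      Dg.mulVec
          (fun l : Fin N =>
            Real.sqrt (2 / N) * Real.sin ((Real.pi * (j - 1) / N) * ((l : ℕ) + 1 - 1 / 2))) =
        (2 * Real.cot (2 * θ / N) -
            2 * (1 / Real.sin (2 * θ / N)) * Real.cos (Real.pi * (j - 1) / N)) •
          (fun l : Fin N =>
            Real.sqrt (2 / N) * Real.sin ((Real.pi * (j - 1) / N) * ((l : ℕ) + 1 - 1 / 2))) :=
  dipole_matrix_remaining_eigenpairs_general N θ Dg hDg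
end

section
/- For the tridiagonal matrices D (with entries d = tan(θ/N) - cot(2θ/N), e = -2cot(2θ/N), f = csc(2θ/N)) and D_g (with entries d_g = cot(2θ/N) + cot(θ/N), e_g = 2cot(2θ/N), f_g = -csc(2θ/N)), and the tridiagonal matrix C with first row (1,1,0,...,0), last row (0,...,0,-1,-1), and interior rows having -1, 0, 1 on the sub-, main, and super-diagonal respectively, the identity C·D_g = -D·C holds for every N ≥ 2 and θ ∈ (0, Nπ/2) away from the singularities of the trigonometric functions. -/
open Real Matrix

/-!
Write `x = θ / N`, `s = 1 / sin 2x`, `c = cot 2x`. The half-angle identities `tan x = s - c` and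
`cot x = c + s` show that `D = s (J + E) - 2c I` and `D_g = 2c I - s (J - E)`, where `J = S + Sᵀ`
is built from the shift `S` (ones on the superdiagonal) and `E = P₀ + P_{N-1}` projects onto the
two end coordinates. Likewise `C = S - Sᵀ + P₀ - P_{N-1}`. The identity therefore reduces to the
trigonometry-free relation `C (J - E) = (J + E) C`, which follows from `S Sᵀ = I - P_{N-1}`,
`Sᵀ S = I - P₀` and the vanishing of `S P₀`, `Sᵀ P_{N-1}`, `P₀ Sᵀ` and `P_{N-1} S`.
-/

namespace Real

theorem cot_eq_cot_two_mul_add_one_div_sin {x : ℝ} (h : sin (2 * x) ≠ 0) :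
    cot x = cot (2 * x) + 1 / sin (2 * x) := by
  obtain ⟨hs, hc⟩ : sin x ≠ 0 ∧ cos x ≠ 0 := by simpa [sin_two_mul] using h
  rw [cot_eq_cos_div_sin, cot_eq_cos_div_sin, sin_two_mul, cos_two_mul]
  field_simp
  ring

theorem tan_eq_one_div_sin_two_mul_sub_cot {x : ℝ} (h : sin (2 * x) ≠ 0) :
    tan x = 1 / sin (2 * x) - cot (2 * x) := by
  obtain ⟨hs, hc⟩ : sin x ≠ 0 ∧ cos x ≠ 0 := by simpa [sin_two_mul] using h
  rw [tan_eq_sin_div_cos, cot_eq_cos_div_sin, sin_two_mul, cos_two_mul]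
  field_simp
  linear_combination 2 * sin_sq_add_cos_sq x

end Real

section

variable {R : Type*} [Ring R]

def upperShift (n : ℕ) : Matrix (Fin n) (Fin n) R :=
  of fun i j => if i.val + 1 = j.val then 1 else 0

def symmTridiagonal (N : ℕ) (a b e : R) : Matrix (Fin N) (Fin N) R :=
  of fun i j =>
    if i = j then (if i.val = 0 ∨ i.val = N - 1 then a else b)
    else if i.val + 1 = j.val ∨ j.val + 1 = i.val then e
    else 0

def differenceMatrix (N : ℕ) : Matrix (Fin N) (Fin N) R :=
  of fun i j =>
    if i.val = 0 then (if j.val ≤ 1 then 1 else 0)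
    else if i.val = N - 1 then (if N - 2 ≤ j.val then -1 else 0)
    else if j.val + 1 = i.val then -1
    else if i.val + 1 = j.val then 1
    else 0

theorem upperShift_mul_apply {n : ℕ} (M : Matrix (Fin n) (Fin n) R) (i j : Fin n) :
    (upperShift n * M : Matrix (Fin n) (Fin n) R) i j =
      if h : i.val + 1 < n then M ⟨i.val + 1, h⟩ j else 0 := by
  rw [mul_apply]
  split_ifs with h
  · rw [Fintype.sum_eq_single ⟨i.val + 1, h⟩]
    · simp [upperShift]
    · intro k hk
      simp only [upperShift, of_apply, ite_mul, one_mul, zero_mul, ite_eq_right_iff]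
      exact fun hik => absurd (Fin.ext hik.symm) hk
  · refine Finset.sum_eq_zero fun k _ => ?_
    simp only [upperShift, of_apply, ite_mul, one_mul, zero_mul, ite_eq_right_iff]
    omega

theorem transpose_upperShift_mul_apply {n : ℕ} (M : Matrix (Fin n) (Fin n) R) (i j : Fin n) :
    ((upperShift n)ᵀ * M : Matrix (Fin n) (Fin n) R) i j =
      if h : 0 < i.val then M ⟨i.val - 1, by omega⟩ j else 0 := by
  rw [mul_apply]
  split_ifs with h
  · rw [Fintype.sum_eq_single ⟨i.val - 1, by omega⟩]
    · simp [upperShift]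
      omega
    · intro k hk
      simp only [transpose_apply, upperShift, of_apply, ite_mul, one_mul, zero_mul,
        ite_eq_right_iff]
      exact fun hki => absurd (Fin.ext (by simp; omega)) hk
  · refine Finset.sum_eq_zero fun k _ => ?_
    simp only [transpose_apply, upperShift, of_apply, ite_mul, one_mul, zero_mul,
      ite_eq_right_iff]
    omega

variable {n : ℕ}

local notation "𝐒" => (upperShift (n + 1) : Matrix (Fin (n + 1)) (Fin (n + 1)) R)
local notation "𝐏" => (single (0 : Fin (n + 1)) 0 1 : Matrix (Fin (n + 1)) (Fin (n + 1)) R)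
local notation "𝐐" =>
  (single (Fin.last n) (Fin.last n) 1 : Matrix (Fin (n + 1)) (Fin (n + 1)) R)

theorem upperShift_mul_transpose : 𝐒 * 𝐒ᵀ = 1 - 𝐐 := by
  ext i j
  rw [upperShift_mul_apply]
  simp only [upperShift, of_apply, Matrix.sub_apply, one_apply, single_apply, Fin.ext_iff,
    transpose_apply, Fin.val_last]
  split_ifs <;> first | omega | simp_all

theorem transpose_upperShift_mul : 𝐒ᵀ * 𝐒 = 1 - 𝐏 := by
  ext i j
  rw [transpose_upperShift_mul_apply]
  simp only [upperShift, of_apply, Matrix.sub_apply, one_apply, single_apply, Fin.ext_iff,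
    Fin.val_zero]
  split_ifs <;> first | omega | simp_all

theorem upperShift_mul_single_zero : 𝐒 * 𝐏 = 0 := by
  ext i j
  rw [upperShift_mul_apply]
  simp only [single_apply, Fin.ext_iff, Fin.val_zero, Matrix.zero_apply]
  split_ifs <;> first | omega | simp_all

theorem transpose_upperShift_mul_single_last : 𝐒ᵀ * 𝐐 = 0 := by
  ext i j
  rw [transpose_upperShift_mul_apply]
  simp only [single_apply, Fin.ext_iff, Fin.val_last, Matrix.zero_apply]
  split_ifs <;> first | omega | simp_all

theorem single_zero_mul_transpose_upperShift : 𝐏 * 𝐒ᵀ = 0 := by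
  ext i j
  rw [mul_apply, Matrix.zero_apply]
  refine Finset.sum_eq_zero fun k _ => ?_
  simp only [single_apply, transpose_apply, upperShift, of_apply, Fin.ext_iff, Fin.val_zero]
  split_ifs <;> first | omega | simp

theorem single_last_mul_upperShift : 𝐐 * 𝐒 = 0 := by
  ext i j
  rw [mul_apply, Matrix.zero_apply]
  refine Finset.sum_eq_zero fun k _ => ?_
  simp only [single_apply, upperShift, of_apply, Fin.ext_iff, Fin.val_last]
  split_ifs <;> first | omega | simp

theorem symmTridiagonal_eq (hn : 1 ≤ n) (a b e : R) :
    symmTridiagonal (n + 1) a b e = b • 1 + e • (𝐒 + 𝐒ᵀ) + (a - b) • (𝐏 + 𝐐) := by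
  ext i j
  simp only [symmTridiagonal, upperShift, of_apply, Matrix.add_apply, Matrix.smul_apply,
    one_apply, transpose_apply, single_apply, Fin.ext_iff, Fin.val_zero, Fin.val_last,
    smul_eq_mul]
  split_ifs <;> first | omega | noncomm_ring

theorem differenceMatrix_eq (hn : 1 ≤ n) :
    differenceMatrix (n + 1) = 𝐒 - 𝐒ᵀ + 𝐏 - 𝐐 := by
  ext i j
  simp only [differenceMatrix, upperShift, of_apply, Matrix.add_apply, Matrix.sub_apply,
    transpose_apply, single_apply, Fin.ext_iff, Fin.val_zero, Fin.val_last]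
  split_ifs <;> first | omega | noncomm_ring

theorem differenceMatrix_intertwines (hn : 1 ≤ n) :
    differenceMatrix (n + 1) * (𝐒 + 𝐒ᵀ - (𝐏 + 𝐐)) =
      (𝐒 + 𝐒ᵀ + (𝐏 + 𝐐)) * differenceMatrix (n + 1) := by
  rw [differenceMatrix_eq hn]
  simp only [add_mul, mul_add, sub_mul, mul_sub, upperShift_mul_transpose,
    transpose_upperShift_mul, upperShift_mul_single_zero, transpose_upperShift_mul_single_last,
    single_zero_mul_transpose_upperShift, single_last_mul_upperShift, single_mul_single_same,
    mul_one]
  abel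

end

theorem matrix_identity_C_Dg_general (N : ℕ) (hN : 2 ≤ N) (θ : ℝ)
    (hsin : Real.sin (2 * θ / N) ≠ 0)
    (D Dg C : Matrix (Fin N) (Fin N) ℝ)
    (hD : D = Matrix.of fun i j =>
      if i = j then
        (if i.val = 0 ∨ i.val = N - 1 then Real.tan (θ / N) - Real.cot (2 * θ / N)
          else -2 * Real.cot (2 * θ / N))
      else if i.val + 1 = j.val ∨ j.val + 1 = i.val then 1 / Real.sin (2 * θ / N)
      else 0)
    (hDg : Dg = Matrix.of fun i j =>
      if i = j then
        (if i.val = 0 ∨ i.val = N - 1 then Real.cot (2 * θ / N) + Real.cot (θ / N)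
          else 2 * Real.cot (2 * θ / N))
      else if i.val + 1 = j.val ∨ j.val + 1 = i.val then -(1 / Real.sin (2 * θ / N))
      else 0)
    (hC : C = Matrix.of fun i j =>
      if i.val = 0 then (if j.val ≤ 1 then 1 else 0)
      else if i.val = N - 1 then (if N - 2 ≤ j.val then -1 else 0)
      else if j.val + 1 = i.val then -1
      else if i.val + 1 = j.val then 1
      else 0) :
    C * Dg = -(D * C) := by
  obtain ⟨n, rfl⟩ : ∃ n, N = n + 1 := ⟨N - 1, by omega⟩
  have hn : 1 ≤ n := by omega
  set x := θ / ((n + 1 : ℕ) : ℝ)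
  have h2x : 2 * θ / ((n + 1 : ℕ) : ℝ) = 2 * x := mul_div_assoc _ _ _
  rw [h2x] at hsin hD hDg
  rw [tan_eq_one_div_sin_two_mul_sub_cot hsin] at hD
  rw [cot_eq_cot_two_mul_add_one_div_sin hsin] at hDg
  change D = symmTridiagonal (n + 1) _ _ _ at hD
  change Dg = symmTridiagonal (n + 1) _ _ _ at hDg
  change C = differenceMatrix (n + 1) at hC
  have key := differenceMatrix_intertwines (R := ℝ) hn
  rw [hD, hDg, hC, symmTridiagonal_eq hn, symmTridiagonal_eq hn]
  simp only [mul_add, add_mul, mul_sub, Matrix.mul_smul, Matrix.smul_mul, mul_one,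
    one_mul] at key ⊢
  linear_combination (norm := module) (-(1 / sin (2 * x))) • key

/-- The tridiagonal matrix identity `C·D_g = -D·C` relating the Green's matrix `D`,
the dipole matrix `D_g`, and the difference matrix `C`. -/
theorem matrix_identity_C_Dg (N : ℕ) (hN : 2 ≤ N) (θ : ℝ)
    (hθ : 0 < θ) (hθN : θ < N * Real.pi / 2)
    (hsin : Real.sin (2 * θ / N) ≠ 0) (hcos : Real.cos (θ / N) ≠ 0)
    (D Dg C : Matrix (Fin N) (Fin N) ℝ)
    (hD : D = Matrix.of fun i j =>
      if i = j then
        (if i.val = 0 ∨ i.val = N - 1 then Real.tan (θ / N) - Real.cot (2 * θ / N)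
          else -2 * Real.cot (2 * θ / N))
      else if i.val + 1 = j.val ∨ j.val + 1 = i.val then 1 / Real.sin (2 * θ / N)
      else 0)
    (hDg : Dg = Matrix.of fun i j =>
      if i = j then
        (if i.val = 0 ∨ i.val = N - 1 then Real.cot (2 * θ / N) + Real.cot (θ / N)
          else 2 * Real.cot (2 * θ / N))
      else if i.val + 1 = j.val ∨ j.val + 1 = i.val then -(1 / Real.sin (2 * θ / N))
      else 0)
    (hC : C = Matrix.of fun i j =>
      if i.val = 0 then (if j.val ≤ 1 then 1 else 0)
      else if i.val = N - 1 then (if N - 2 ≤ j.val then -1 else 0)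
      else if j.val + 1 = i.val then -1
      else if i.val + 1 = j.val then 1
      else 0) :
    C * Dg = -(D * C) :=
  matrix_identity_C_Dg_general N hN θ hsin D Dg C hD hDg hC
end

section
/- Define B(ℓ) = v(ℓ)³/sin(θℓ) where v(ℓ) > 0 satisfies v·e^{χv}·cot(θℓ) = K for a constant K > 0, with θ, χ > 0 and θℓ ∈ (0, π/2). Then B'(ℓ) = θv³/(sin²(θℓ)cos(θℓ))·[3/(1 + χv) - cos²(θℓ)], and B'(ℓ) = 0 if and only if cos(2θℓ) = (1-a₁)/(1+a₁) where a₁ = (χv - 2)/3. -/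
/-!
Implicit differentiation of `v e^{χv} cot(θℓ) = K` gives `v' (1 + χv) sin(θℓ) cos(θℓ) = θv`;
substituting this `v'` into the quotient rule for `v³ / sin(θℓ)` yields the formula for `B'`.
Its prefactor does not vanish, so `B' = 0` iff `cos²(θℓ) = 3 / (1 + χv)`, which
`cos² t = (1 + cos 2t) / 2` turns into the stated condition on `cos(2θℓ)`.
-/

open Real Filter Topology

theorem Real.hasDerivAt_cot_const_mul {θ l : ℝ} (hs : sin (θ * l) ≠ 0) :
    HasDerivAt (fun x => cot (θ * x)) (-θ / sin (θ * l) ^ 2) l := by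
  have hlin : HasDerivAt (fun x : ℝ => θ * x) θ l := hasDerivAt_const_mul θ
  simp only [cot_eq_cos_div_sin]
  refine (hlin.cos.div hlin.sin hs).congr_deriv ?_
  field_simp
  linear_combination -θ * sin_sq_add_cos_sq (θ * l)

theorem HasDerivAt.mul_exp_const_mul {v : ℝ → ℝ} {v' l : ℝ} (χ : ℝ) (hv : HasDerivAt v v' l) :
    HasDerivAt (fun x => v x * Real.exp (χ * v x)) (v' * (1 + χ * v l) * Real.exp (χ * v l)) l :=
  (hv.mul (hv.const_mul χ).exp).congr_deriv (by ring)

theorem mul_one_add_mul_sin_mul_cos_eq_of_hasDerivAt {θ χ K l v' : ℝ} {v : ℝ → ℝ}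
    (hrel : ∀ᶠ x in 𝓝 l, v x * exp (χ * v x) * cot (θ * x) = K)
    (hv : HasDerivAt v v' l) (hs : sin (θ * l) ≠ 0) :
    v' * (1 + χ * v l) * (sin (θ * l) * cos (θ * l)) = θ * v l := by
  have hzero : HasDerivAt (fun x => v x * exp (χ * v x) * cot (θ * x)) 0 l :=
    (hasDerivAt_const l K).congr_of_eventuallyEq hrel
  have h := (hzero.unique ((hv.mul_exp_const_mul χ).mul (hasDerivAt_cot_const_mul hs))).symm
  rw [cot_eq_cos_div_sin] at h
  field_simp at h
  have he : exp (χ * v l) ≠ 0 := (exp_pos _).ne'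
  exact mul_left_cancel₀ he (by linear_combination h)

theorem hasDerivAt_pow_three_div_sin {θ χ l v' : ℝ} {v : ℝ → ℝ} (hv : HasDerivAt v v' l)
    (hs : sin (θ * l) ≠ 0) (hc : cos (θ * l) ≠ 0) (hχv : 1 + χ * v l ≠ 0)
    (himpl : v' * (1 + χ * v l) * (sin (θ * l) * cos (θ * l)) = θ * v l) :
    HasDerivAt (fun x => v x ^ 3 / sin (θ * x))
      (θ * v l ^ 3 / (sin (θ * l) ^ 2 * cos (θ * l)) *
        (3 / (1 + χ * v l) - cos (θ * l) ^ 2)) l := by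
  have hlin : HasDerivAt (fun x : ℝ => θ * x) θ l := hasDerivAt_const_mul θ
  refine ((hv.fun_pow 3).div hlin.sin hs).congr_deriv ?_
  have hv' : v' = θ * v l / ((1 + χ * v l) * (sin (θ * l) * cos (θ * l))) := by
    rw [eq_div_iff (mul_ne_zero hχv (mul_ne_zero hs hc))]; linear_combination himpl
  rw [hv']
  field_simp
  ring

theorem three_div_one_add_sub_cos_sq_eq_zero_iff {x t : ℝ} (hx : 1 + x ≠ 0) :
    3 / (1 + x) - cos t ^ 2 = 0 ↔ cos (2 * t) = (1 - (x - 2) / 3) / (1 + (x - 2) / 3) := by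
  have hx' : 1 + (x - 2) / 3 ≠ 0 := fun h => hx (by linarith)
  rw [cos_sq t, sub_eq_zero, div_eq_iff hx, eq_div_iff hx']
  constructor <;> intro h <;> linarith

theorem asymmetric_bifurcation_point_general (θ χ K : ℝ) (hχ : 0 < χ)
    (v : ℝ → ℝ) (B : ℝ → ℝ)
    (hB : B = fun l => (v l) ^ 3 / Real.sin (θ * l))
    (ℓ : ℝ) (hℓ : θ * ℓ ∈ Set.Ioo 0 (Real.pi / 2))
    (hv : DifferentiableAt ℝ v ℓ) (hvpos : 0 < v ℓ)
    (hrel : ∀ l : ℝ, θ * l ∈ Set.Ioo 0 (Real.pi / 2) →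
      v l * Real.exp (χ * v l) * Real.cot (θ * l) = K) :
    deriv B ℓ =
        θ * (v ℓ) ^ 3 / (Real.sin (θ * ℓ) ^ 2 * Real.cos (θ * ℓ)) *
          (3 / (1 + χ * v ℓ) - Real.cos (θ * ℓ) ^ 2) ∧
      (deriv B ℓ = 0 ↔
        Real.cos (2 * θ * ℓ) = (1 - (χ * v ℓ - 2) / 3) / (1 + (χ * v ℓ - 2) / 3)) := by
  obtain ⟨hl0, hlπ⟩ := hℓ
  have hs : 0 < sin (θ * ℓ) := sin_pos_of_pos_of_lt_pi hl0 (by linarith [pi_pos])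
  have hc : 0 < cos (θ * ℓ) := cos_pos_of_mem_Ioo ⟨by linarith [pi_pos], hlπ⟩
  have hχv : 0 < 1 + χ * v ℓ := by positivity
  have hrel_nhds : ∀ᶠ l in 𝓝 ℓ, v l * exp (χ * v l) * cot (θ * l) = K :=
    Filter.mem_of_superset
      ((isOpen_Ioo.preimage (continuous_const_mul θ)).mem_nhds ⟨hl0, hlπ⟩) hrel
  have hv' : HasDerivAt v (deriv v ℓ) ℓ := hv.hasDerivAt
  have hB' := hasDerivAt_pow_three_div_sin hv' hs.ne' hc.ne' hχv.ne'
    (mul_one_add_mul_sin_mul_cos_eq_of_hasDerivAt hrel_nhds hv' hs.ne')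
  have hθ : θ ≠ 0 := left_ne_zero_of_mul hl0.ne'
  subst hB
  rw [hB'.deriv, mul_eq_zero, mul_assoc 2, ← three_div_one_add_sub_cos_sq_eq_zero_iff hχv.ne']
  exact ⟨rfl, or_iff_right (by positivity)⟩

/-- Bifurcation point for asymmetric spike equilibria: with `B(ℓ) = v(ℓ)³/sin(θℓ)`
and `v·e^{χv}·cot(θℓ) = K`, the derivative satisfies
`B'(ℓ) = θv³/(sin²(θℓ)cos(θℓ))·[3/(1+χv) - cos²(θℓ)]`, and `B'(ℓ) = 0` iff
`cos(2θℓ) = (1-a₁)/(1+a₁)` with `a₁ = (χv-2)/3`. -/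
theorem asymmetric_bifurcation_point (θ χ K : ℝ) (hθ : 0 < θ) (hχ : 0 < χ)
    (hK : 0 < K)
    (v : ℝ → ℝ) (B : ℝ → ℝ)
    (hB : B = fun l => (v l) ^ 3 / Real.sin (θ * l))
    (ℓ : ℝ) (hℓ : θ * ℓ ∈ Set.Ioo 0 (Real.pi / 2))
    (hv : DifferentiableAt ℝ v ℓ) (hvpos : 0 < v ℓ)
    (hrel : ∀ l : ℝ, θ * l ∈ Set.Ioo 0 (Real.pi / 2) →
      v l * Real.exp (χ * v l) * Real.cot (θ * l) = K) :
    deriv B ℓ =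
        θ * (v ℓ) ^ 3 / (Real.sin (θ * ℓ) ^ 2 * Real.cos (θ * ℓ)) *
          (3 / (1 + χ * v ℓ) - Real.cos (θ * ℓ) ^ 2) ∧
      (deriv B ℓ = 0 ↔
        Real.cos (2 * θ * ℓ) = (1 - (χ * v ℓ - 2) / 3) / (1 + (χ * v ℓ - 2) / 3)) :=
  asymmetric_bifurcation_point_general θ χ K hχ v B hB ℓ hℓ hv hvpos hrel
end
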